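/- arXiv:2004.04920 — 10 statements merged into one kernel-verified Lean document; each statement's English description precedes it below -/
import Mathlib

section
/- Let p be a prime, let f₁ : ℕ → ℂ be eventually periodic with f₁(0) = 1, and let f₂ : ℕ → ℂ be eventually periodic and multiplicative. Then the sequence a : ℕ → ℂ given by a(n) = f₁(ν_p(n)) · f₂(n / p^{ν_p(n)}) for n ≥ 1 is multiplicative and p-automatic. -/
/-- A sequence `f : ℕ → ℂ` is `lam`-automatic if its `lam`-kernel is finite. -/
def IsAutomatic (lam : ℕ) (f : ℕ → ℂ) : Prop :=
  {g : ℕ → ℂ | ∃ k r : ℕ, r < lam ^ k ∧ g = fun n => f (lam ^ k * n + r)}.Finite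

/-- A sequence is multiplicative if `f 1 = 1` and `f (m*n) = f m * f n` for coprime `m n ≥ 1`. -/
def IsMultiplicativeSeq (f : ℕ → ℂ) : Prop :=
  f 1 = 1 ∧ ∀ m n : ℕ, 1 ≤ m → 1 ≤ n → Nat.Coprime m n → f (m * n) = f m * f n

/-- Eventually periodic sequence. -/
def EventuallyPeriodicSeq (f : ℕ → ℂ) : Prop :=
  ∃ d : ℕ, 1 ≤ d ∧ ∃ n₀ : ℕ, ∀ n ≥ n₀, f (n + d) = f n

/-- A Dirichlet character of modulus `k`: `k`-periodic, completely multiplicative,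
and vanishing exactly at arguments not coprime to `k`. -/
def IsDirichletCharacterSeq (k : ℕ) (χ : ℕ → ℂ) : Prop :=
  (∀ n : ℕ, χ (n + k) = χ n) ∧ (∀ m n : ℕ, χ (m * n) = χ m * χ n) ∧
    (∀ n : ℕ, χ n = 0 ↔ 1 < Nat.gcd n k)

private lemma periodic_iterate {f : ℕ → ℂ} {d n₀ : ℕ}
    (hper : ∀ n ≥ n₀, f (n + d) = f n) :
    ∀ t n, n₀ ≤ n → f (n + t * d) = f n := by
  intro t
  induction t with
  | zero => simp
  | succ t ih =>
    intro n hn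
    have h : n + (t + 1) * d = (n + t * d) + d := by ring
    rw [h, hper _ (le_trans hn (Nat.le_add_right _ _)), ih n hn]

private lemma range_mem_image {f : ℕ → ℂ} {d n₀ : ℕ} (hd : 1 ≤ d)
    (hper : ∀ n ≥ n₀, f (n + d) = f n) :
    ∀ n, f n ∈ f '' Set.Iio (n₀ + d) := by
  intro n
  induction n using Nat.strong_induction_on with
  | _ n ih =>
    by_cases h : n < n₀ + d
    · exact ⟨n, h, rfl⟩
    · push_neg at h
      have h1 : n₀ ≤ n - d := by omega
      have h2 : (n - d) + d = n := by omega
      have := hper (n - d) h1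
      rw [h2] at this
      rw [this]
      exact ih (n - d) (by omega)

private lemma finite_periodic (V : Set ℂ) (hV : V.Finite) (d n₀ : ℕ) (hd : 1 ≤ d) :
    {h : ℕ → ℂ | (∀ n ≥ n₀, h (n + d) = h n) ∧ ∀ n, h n ∈ V}.Finite := by
  have key : ∀ h h' : ℕ → ℂ, (∀ n ≥ n₀, h (n + d) = h n) →
      (∀ n ≥ n₀, h' (n + d) = h' n) →
      (∀ i : Fin (n₀ + d), h i = h' i) → h = h' := by
    intro h h' hp hp' hagree
    funext n
    induction n using Nat.strong_induction_on with
    | _ n ih =>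
      by_cases hlt : n < n₀ + d
      · exact hagree ⟨n, hlt⟩
      · push_neg at hlt
        have h1 : n₀ ≤ n - d := by omega
        have h2 : (n - d) + d = n := by omega
        rw [← h2, hp _ h1, hp' _ h1]
        exact ih (n - d) (by omega)
  apply Set.Finite.of_finite_image (f := fun h => fun i : Fin (n₀ + d) => h i)
  · apply Set.Finite.subset (Set.Finite.pi (fun _ : Fin (n₀ + d) => hV))
    rintro q ⟨h, ⟨_, hvals⟩, rfl⟩
    intro i _
    exact hvals i
  · rintro h ⟨hp, _⟩ h' ⟨hp', _⟩ heq
    exact key h h' hp hp' (fun i => congrFun heq i)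

theorem stmt_1 (p : ℕ) (hp : p.Prime)
    (f₁ : ℕ → ℂ) (hf₁ : EventuallyPeriodicSeq f₁) (hf₁0 : f₁ 0 = 1)
    (f₂ : ℕ → ℂ) (hf₂ : EventuallyPeriodicSeq f₂) (hf₂m : IsMultiplicativeSeq f₂)
    (a : ℕ → ℂ)
    (hdef : ∀ n : ℕ, 1 ≤ n →
      a n = f₁ (padicValNat p n) * f₂ (n / p ^ padicValNat p n)) :
    IsMultiplicativeSeq a ∧ IsAutomatic p a := by
  haveI : Fact p.Prime := ⟨hp⟩
  have hp1 : 1 < p := hp.one_lt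
  -- multiplicativity
  have hmul : IsMultiplicativeSeq a := by
    constructor
    · rw [hdef 1 le_rfl, padicValNat.one]
      simp [hf₁0, hf₂m.1]
    · intro m n hm hn hcop
      have hm0 : m ≠ 0 := by omega
      have hn0 : n ≠ 0 := by omega
      set νm := padicValNat p m with hνm
      set νn := padicValNat p n with hνn
      have hdvdm : p ^ νm ∣ m := pow_padicValNat_dvd
      have hdvdn : p ^ νn ∣ n := pow_padicValNat_dvd
      have hval : padicValNat p (m * n) = νm + νn := padicValNat.mul hm0 hn0
      have hdiv : (m * n) / p ^ (νm + νn) = (m / p ^ νm) * (n / p ^ νn) := by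
        rw [pow_add, Nat.div_mul_div_comm hdvdm hdvdn]
      have hm' : 1 ≤ m / p ^ νm := Nat.div_pos (Nat.le_of_dvd (by omega) hdvdm) (pow_pos hp.pos _)
      have hn' : 1 ≤ n / p ^ νn := Nat.div_pos (Nat.le_of_dvd (by omega) hdvdn) (pow_pos hp.pos _)
      have hdm : m / p ^ νm ∣ m := ⟨p ^ νm, (Nat.div_mul_cancel hdvdm).symm⟩
      have hdn : n / p ^ νn ∣ n := ⟨p ^ νn, (Nat.div_mul_cancel hdvdn).symm⟩
      have hcop' : Nat.Coprime (m / p ^ νm) (n / p ^ νn) :=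
        (hcop.coprime_dvd_left hdm).coprime_dvd_right hdn
      have hf1 : f₁ (νm + νn) = f₁ νm * f₁ νn := by
        have : νm = 0 ∨ νn = 0 := by
          by_contra hc
          push_neg at hc
          have h1 : p ∣ m := dvd_trans (dvd_pow_self p hc.1) hdvdm
          have h2 : p ∣ n := dvd_trans (dvd_pow_self p hc.2) hdvdn
          have := Nat.dvd_gcd h1 h2
          rw [hcop] at this
          exact absurd (Nat.le_of_dvd one_pos this) (by omega)
        rcases this with h | h
        · rw [h, zero_add, hf₁0, one_mul]
        · rw [h, add_zero, hf₁0, mul_one]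
      rw [hdef (m * n) (Nat.one_le_iff_ne_zero.mpr (Nat.mul_ne_zero hm0 hn0)), hdef m hm, hdef n hn, hval, hdiv,
        hf₂m.2 _ _ hm' hn' hcop', hf1]
      ring
  refine ⟨hmul, ?_⟩
  -- automaticity
  obtain ⟨d₁, hd₁, m₀, hper₁⟩ := hf₁
  obtain ⟨d₂, hd₂, n₀, hper₂⟩ := hf₂
  set V : Set ℂ := Set.image2 (· * ·) (f₁ '' Set.Iio (m₀ + d₁)) (f₂ '' Set.Iio (n₀ + d₂)) with hV
  have hVfin : V.Finite :=
    Set.Finite.image2 _ ((Set.finite_Iio _).image f₁) ((Set.finite_Iio _).image f₂)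
  have hEfin := finite_periodic V hVfin d₂ n₀ hd₂
  have hS1fin : ((fun k => fun n => a (p ^ k * n)) '' Set.Iio (m₀ + d₁)).Finite :=
    (Set.finite_Iio _).image _
  -- value of a at p^k * n
  have aval : ∀ k n : ℕ, 1 ≤ n →
      a (p ^ k * n) = f₁ (k + padicValNat p n) * f₂ (n / p ^ padicValNat p n) := by
    intro k n hn
    have hn0 : n ≠ 0 := by omega
    have hpk : p ^ k ≠ 0 := (pow_pos hp.pos k).ne'
    have hval : padicValNat p (p ^ k * n) = k + padicValNat p n := by
      rw [padicValNat.mul hpk hn0, padicValNat.prime_pow]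
    have hdiv : (p ^ k * n) / p ^ (k + padicValNat p n) = n / p ^ padicValNat p n := by
      rw [pow_add, Nat.mul_div_mul_left _ _ (pow_pos hp.pos k)]
    rw [hdef _ (Nat.one_le_iff_ne_zero.mpr (Nat.mul_ne_zero hpk hn0)), hval, hdiv]
  apply Set.Finite.subset (hS1fin.union hEfin)
  rintro g ⟨k, r, hr, rfl⟩
  rcases Nat.eq_zero_or_pos r with rfl | hr1
  · left
    simp only [add_zero]
    -- membership by strong induction on k
    have claim : ∀ k : ℕ, (fun n => a (p ^ k * n)) ∈
        (fun k => fun n => a (p ^ k * n)) '' Set.Iio (m₀ + d₁) := by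
      intro k
      induction k using Nat.strong_induction_on with
      | _ k ih =>
        by_cases hk : k < m₀ + d₁
        · exact ⟨k, hk, rfl⟩
        · push_neg at hk
          have heq : (fun n => a (p ^ k * n)) = (fun n => a (p ^ (k - d₁) * n)) := by
            funext n
            rcases Nat.eq_zero_or_pos n with rfl | hn
            · simp
            · rw [aval k n hn, aval (k - d₁) n hn]
              have h1 : m₀ ≤ k - d₁ + padicValNat p n := by omega
              have h2 : (k - d₁ + padicValNat p n) + d₁ = k + padicValNat p n := by omega
              rw [← hper₁ _ h1, h2]
          rw [heq]
          exact ih (k - d₁) (by omega)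
    exact claim k
  · right
    set ν := padicValNat p r with hν
    have hdvdr : p ^ ν ∣ r := pow_padicValNat_dvd
    have hνk : ν < k := by
      have h1 : p ^ ν ≤ r := Nat.le_of_dvd hr1 hdvdr
      have h2 : p ^ ν < p ^ k := lt_of_le_of_lt h1 hr
      exact (Nat.pow_lt_pow_iff_right hp1).mp h2
    set r' := r / p ^ ν with hr'
    have hrr' : p ^ ν * r' = r := Nat.mul_div_cancel' hdvdr
    have hr'1 : 1 ≤ r' := Nat.div_pos (Nat.le_of_dvd hr1 hdvdr) (pow_pos hp.pos _)
    have hpr' : ¬ p ∣ r' := by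
      intro hdvd
      have : p ^ (ν + 1) ∣ r := by
        rw [pow_succ, ← hrr']
        exact mul_dvd_mul_left _ hdvd
      exact pow_succ_padicValNat_not_dvd (by omega) this
    -- key formula
    have key : ∀ n : ℕ, a (p ^ k * n + r) = f₁ ν * f₂ (p ^ (k - ν) * n + r') := by
      intro n
      set M := p ^ (k - ν) * n + r' with hM
      have hM1 : M ≠ 0 := by
        have : 1 ≤ M := le_trans hr'1 (Nat.le_add_left _ _)
        omega
      have hfac : p ^ k * n + r = p ^ ν * M := by
        have : p ^ ν * p ^ (k - ν) = p ^ k := by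
          rw [← pow_add]
          congr 1
          omega
        calc p ^ k * n + r = (p ^ ν * p ^ (k - ν)) * n + p ^ ν * r' := by rw [this, hrr']
          _ = p ^ ν * M := by rw [hM]; ring
      have hpM : ¬ p ∣ M := by
        intro hdvd
        have hd1 : p ∣ p ^ (k - ν) * n := by
          apply Dvd.dvd.mul_right
          exact dvd_pow_self p (by omega)
        have : p ∣ r' := (Nat.dvd_add_right hd1).mp hdvd
        exact hpr' this
      have hval : padicValNat p (p ^ ν * M) = ν := by
        rw [padicValNat.mul (pow_pos hp.pos ν).ne' hM1, padicValNat.prime_pow,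
          padicValNat.eq_zero_of_not_dvd hpM, add_zero]
      have hdiv : (p ^ ν * M) / p ^ ν = M := Nat.mul_div_cancel_left _ (pow_pos hp.pos ν)
      rw [hfac, hdef _ (by omega), hval, hdiv]
    constructor
    · -- eventual periodicity
      intro n hn
      simp only
      rw [key, key]
      congr 1
      have harg : p ^ (k - ν) * (n + d₂) + r' = (p ^ (k - ν) * n + r') + p ^ (k - ν) * d₂ := by
        ring
      rw [harg]
      apply periodic_iterate hper₂
      calc n₀ ≤ n := hn
        _ ≤ p ^ (k - ν) * n := Nat.le_mul_of_pos_left _ (pow_pos hp.pos _)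
        _ ≤ p ^ (k - ν) * n + r' := Nat.le_add_right _ _
    · -- values in V
      intro n
      simp only
      rw [key]
      exact Set.mem_image2_of_mem (range_mem_image hd₁ hper₁ ν) (range_mem_image hd₂ hper₂ _)
end

section
/- Let p be a prime and let a : ℕ → ℂ be a p-automatic multiplicative sequence that is not identically zero on the positive integers. Then there exist unique sequences f₁, f₂ : ℕ → ℂ such that a(n) = f₁(ν_p(n)) · f₂(n / p^{ν_p(n)}) for all n ≥ 1, f₁ is eventually periodic, f₁(0) = 1, f₂ is multiplicative, and f₂(n) = 0 for all n with p ∣ n. That is, if (f₁, f₂) and (g₁, g₂) are two such pairs, then f₁(k) = g₁(k) for all k ≥ 0 and f₂(n) = g₂(n) for all n ≥ 1. -/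
theorem stmt_2 (p : ℕ) (hp : p.Prime) (a : ℕ → ℂ)
    (haut : IsAutomatic p a) (ha : IsMultiplicativeSeq a)
    (hne : ∃ n : ℕ, 1 ≤ n ∧ a n ≠ 0) :
    (∃ f₁ f₂ : ℕ → ℂ,
      (∀ n : ℕ, 1 ≤ n → a n = f₁ (padicValNat p n) * f₂ (n / p ^ padicValNat p n)) ∧
      EventuallyPeriodicSeq f₁ ∧ f₁ 0 = 1 ∧ IsMultiplicativeSeq f₂ ∧
      (∀ n : ℕ, p ∣ n → f₂ n = 0)) ∧
    (∀ f₁ f₂ g₁ g₂ : ℕ → ℂ,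
      ((∀ n : ℕ, 1 ≤ n → a n = f₁ (padicValNat p n) * f₂ (n / p ^ padicValNat p n)) ∧
        EventuallyPeriodicSeq f₁ ∧ f₁ 0 = 1 ∧ IsMultiplicativeSeq f₂ ∧
        (∀ n : ℕ, p ∣ n → f₂ n = 0)) →
      ((∀ n : ℕ, 1 ≤ n → a n = g₁ (padicValNat p n) * g₂ (n / p ^ padicValNat p n)) ∧
        EventuallyPeriodicSeq g₁ ∧ g₁ 0 = 1 ∧ IsMultiplicativeSeq g₂ ∧
        (∀ n : ℕ, p ∣ n → g₂ n = 0)) →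
      (∀ k : ℕ, f₁ k = g₁ k) ∧ (∀ n : ℕ, 1 ≤ n → f₂ n = g₂ n)) := by
  have hp1 : 1 < p := hp.one_lt
  have hppos : 0 < p := hp.pos
  -- key facts about padicValNat of p^k * m when ¬ p ∣ m
  have hval : ∀ k m : ℕ, 0 < m → ¬ p ∣ m → padicValNat p (p ^ k * m) = k := by
    intro k m hm hpm
    haveI : Fact p.Prime := ⟨hp⟩
    rw [padicValNat.mul (pow_ne_zero _ hppos.ne') hm.ne', padicValNat.prime_pow,
      padicValNat.eq_zero_of_not_dvd hpm, Nat.add_zero]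
  have hfac : ∀ n : ℕ, n.factorization p = padicValNat p n := fun n => Nat.factorization_def n hp
  constructor
  · -- existence
    refine ⟨fun k => a (p ^ k), fun n => if p ∣ n then 0 else a n, ?_, ?_, ?_, ?_, ?_⟩
    · intro n hn
      set v := padicValNat p n with hv
      have hn0 : n ≠ 0 := Nat.one_le_iff_ne_zero.mp hn
      have hm : ¬ p ∣ n / p ^ v := by
        have := Nat.not_dvd_ordCompl hp hn0; rwa [hfac n] at this
      have hmpos : 0 < n / p ^ v := by
        have := Nat.ordCompl_pos p hn0; rwa [hfac n] at this
      have hsplit : p ^ v * (n / p ^ v) = n := by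
        have := Nat.ordProj_mul_ordCompl_eq_self n p; rwa [hfac n] at this
      have hcop : Nat.Coprime (p ^ v) (n / p ^ v) :=
        Nat.Coprime.pow_left _ ((Nat.Prime.coprime_iff_not_dvd hp).mpr hm)
      have key := ha.2 (p ^ v) (n / p ^ v)
        (Nat.one_le_iff_ne_zero.mpr (pow_ne_zero _ hppos.ne')) hmpos hcop
      rw [hsplit] at key
      simp only
      rw [if_neg hm]
      exact key
    · -- eventually periodic via pigeonhole on the kernel
      have hmaps : Set.MapsTo (fun k => (fun n => a (p ^ k * n + 0)))
          Set.univ {g : ℕ → ℂ | ∃ k r : ℕ, r < p ^ k ∧ g = fun n => a (p ^ k * n + r)} := by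
        intro k _
        exact ⟨k, 0, pow_pos hppos k, rfl⟩
      obtain ⟨k, -, l, -, hkl, heq⟩ :=
        Set.infinite_univ.exists_ne_map_eq_of_mapsTo hmaps haut
      wlog hlt : k < l generalizing k l
      · exact this l k hkl.symm heq.symm (by omega)
      refine ⟨l - k, by omega, k, fun j hj => ?_⟩
      have h1 : ∀ n, a (p ^ k * n) = a (p ^ l * n) := by
        intro n
        have := congrFun heq n
        simpa using this
      have := h1 (p ^ (j - k))
      rw [← pow_add, ← pow_add] at this
      have e1 : k + (j - k) = j := by omega
      have e2 : l + (j - k) = j + (l - k) := by omega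
      rw [e1, e2] at this
      exact this.symm
    · simpa using ha.1
    · constructor
      · have h1 : ¬ p ∣ 1 := fun h => absurd (Nat.dvd_one.mp h) hp.one_lt.ne'
        simp only
        rw [if_neg h1]
        exact ha.1
      · intro m n hm hn hcop
        simp only
        by_cases hdm : p ∣ m
        · rw [if_pos (hdm.mul_right n), if_pos hdm, zero_mul]
        by_cases hdn : p ∣ n
        · rw [if_pos (hdn.mul_left m), if_neg hdm, if_pos hdn, mul_zero]
        · have : ¬ p ∣ m * n := fun h => ((hp.dvd_mul.mp h).elim hdm hdn)
          rw [if_neg this, if_neg hdm, if_neg hdn]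
          exact ha.2 m n hm hn hcop
    · intro n hn; simp only; rw [if_pos hn]
  · -- uniqueness
    rintro f₁ f₂ g₁ g₂ ⟨hf, -, hf10, -, hf2p⟩ ⟨hg, -, hg10, -, hg2p⟩
    obtain ⟨n, hn, hane⟩ := hne
    have hn0 : n ≠ 0 := Nat.one_le_iff_ne_zero.mp hn
    set v := padicValNat p n with hv
    set m := n / p ^ v with hm'
    have hmnd : ¬ p ∣ m := by
      have := Nat.not_dvd_ordCompl hp hn0; rwa [hfac n] at this
    have hmpos : 0 < m := by
      have := Nat.ordCompl_pos p hn0; rwa [hfac n] at this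
    have hsplit : p ^ v * m = n := by
      have := Nat.ordProj_mul_ordCompl_eq_self n p; rwa [hfac n] at this
    have ham : a m ≠ 0 := by
      intro h
      apply hane
      rw [← hsplit, ha.2 _ _ (Nat.one_le_iff_ne_zero.mpr (pow_ne_zero _ hppos.ne')) hmpos
        (Nat.Coprime.pow_left _ ((Nat.Prime.coprime_iff_not_dvd hp).mpr hmnd)), h, mul_zero]
    have hvalm : padicValNat p m = 0 := padicValNat.eq_zero_of_not_dvd hmnd
    have hf2m : f₂ m = a m := by
      have := hf m hmpos
      rw [hvalm, pow_zero, Nat.div_one, hf10, one_mul] at this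
      exact this.symm
    have hg2m : g₂ m = a m := by
      have := hg m hmpos
      rw [hvalm, pow_zero, Nat.div_one, hg10, one_mul] at this
      exact this.symm
    constructor
    · intro k
      have hpos : 1 ≤ p ^ k * m := Nat.one_le_iff_ne_zero.mpr
        (Nat.mul_ne_zero (pow_ne_zero _ hppos.ne') hmpos.ne')
      have hvk : padicValNat p (p ^ k * m) = k := hval k m hmpos hmnd
      have hdiv : p ^ k * m / p ^ k = m := Nat.mul_div_cancel_left m (pow_pos hppos k)
      have h1 := hf (p ^ k * m) hpos
      have h2 := hg (p ^ k * m) hpos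
      rw [hvk, hdiv, hf2m] at h1
      rw [hvk, hdiv, hg2m] at h2
      have : f₁ k * a m = g₁ k * a m := by rw [← h1, ← h2]
      exact mul_right_cancel₀ ham this
    · intro n' hn'
      by_cases hd : p ∣ n'
      · rw [hf2p n' hd, hg2p n' hd]
      · have hvaln' : padicValNat p n' = 0 := padicValNat.eq_zero_of_not_dvd hd
        have h1 := hf n' hn'
        have h2 := hg n' hn'
        rw [hvaln', pow_zero, Nat.div_one, hf10, one_mul] at h1
        rw [hvaln', pow_zero, Nat.div_one, hg10, one_mul] at h2
        rw [← h1, ← h2]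
end

section
/- Let p be a prime and let f₁ : ℕ → ℂ be a sequence with f₁(0) = 1. Then the sequence a₁ : ℕ → ℂ given by a₁(n) = f₁(ν_p(n)) is multiplicative (i.e. a₁(mn) = a₁(m)·a₁(n) for all coprime m, n ≥ 1, and a₁(1) = 1). Moreover, if f₁ is eventually periodic, then a₁ is p-automatic. -/
/-!
For `0 < r < p ^ k` one has `ν_p (p ^ k * n + r) = ν_p r`, so those kernel sequences are constants
taken from the range of `f`. The others are `n ↦ f (k + ν_p n)` (for `n ≥ 1`); as a function of `k`
this family inherits the eventual periodicity of `f`, and an eventually periodic sequence takes only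
finitely many values.
-/

theorem Set.finite_range_of_eventually_periodic {α : Type*} (g : ℕ → α) {d n₀ : ℕ} (hd : 0 < d)
    (hg : ∀ n ≥ n₀, g (n + d) = g n) : (Set.range g).Finite := by
  refine ((Set.finite_Iio (n₀ + d)).image g).subset ?_
  rintro _ ⟨n, rfl⟩
  induction n using Nat.strong_induction_on with
  | _ n ih =>
    by_cases hn : n < n₀ + d
    · exact ⟨n, hn, rfl⟩
    · obtain ⟨m, rfl⟩ : ∃ m, n = m + d := ⟨n - d, by omega⟩
      rw [hg m (by omega)]
      exact ih m (by omega)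

theorem padicValNat_pow_mul_add {p : ℕ} [Fact p.Prime] {k r : ℕ} (n : ℕ) (hr0 : r ≠ 0)
    (hr : r < p ^ k) : padicValNat p (p ^ k * n + r) = padicValNat p r := by
  have hv : padicValNat p r < k :=
    (padicValNat_le_nat_log r).trans_lt (Nat.log_lt_of_lt_pow hr0 hr)
  have hsum : p ^ k * n + r ≠ 0 := by omega
  have hdvd : ∀ j ≤ k, p ^ j ∣ p ^ k * n + r ↔ p ^ j ∣ r := fun j hj =>
    Nat.dvd_add_right (dvd_mul_of_dvd_left (pow_dvd_pow p hj) n)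
  apply le_antisymm
  · by_contra! h
    exact pow_succ_padicValNat_not_dvd hr0 ((hdvd _ hv).1 ((padicValNat_dvd_iff_le hsum).2 h))
  · exact (padicValNat_dvd_iff_le hsum).1 ((hdvd _ hv.le).2 pow_padicValNat_dvd)

section

variable {p : ℕ} [Fact p.Prime] {f : ℕ → ℂ}

theorem isMultiplicativeSeq_comp_padicValNat (hf : f 0 = 1) :
    IsMultiplicativeSeq fun n => f (padicValNat p n) := by
  refine ⟨by simpa using hf, fun m n hm hn hmn => ?_⟩
  dsimp only
  rw [padicValNat.mul (by omega) (by omega)]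
  by_cases hpm : p ∣ m
  · have hpn : ¬p ∣ n := fun hpn =>
      (Fact.out : p.Prime).one_lt.ne' (Nat.eq_one_of_dvd_coprimes hmn hpm hpn)
    simp [padicValNat.eq_zero_of_not_dvd hpn, hf]
  · simp [padicValNat.eq_zero_of_not_dvd hpm, hf]

theorem isAutomatic_comp_padicValNat (hf : EventuallyPeriodicSeq f) :
    IsAutomatic p fun n => f (padicValNat p n) := by
  obtain ⟨d, hd, n₀, hper⟩ := hf
  have hp0 : p ≠ 0 := (Fact.out : p.Prime).ne_zero
  have hdiv : (Set.range fun k n => f (padicValNat p (p ^ k * n))).Finite := by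
    refine Set.finite_range_of_eventually_periodic _ hd fun k (hk : n₀ ≤ k) => funext fun n => ?_
    rcases eq_or_ne n 0 with rfl | hn
    · simp
    · simp only [padicValNat.mul (pow_ne_zero _ hp0) hn, padicValNat.prime_pow]
      rw [add_right_comm, hper _ (by omega)]
  have hconst : ((fun c _ => c) '' Set.range f : Set (ℕ → ℂ)).Finite :=
    (Set.finite_range_of_eventually_periodic f hd hper).image _
  refine (hdiv.union hconst).subset ?_
  rintro _ ⟨k, r, hr, rfl⟩
  rcases eq_or_ne r 0 with rfl | hr0
  · exact Or.inl ⟨k, rfl⟩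
  · refine Or.inr ⟨_, ⟨padicValNat p r, rfl⟩, funext fun n => ?_⟩
    simp only [padicValNat_pow_mul_add n hr0 hr]

end

theorem stmt_3 (p : ℕ) (hp : p.Prime)
    (f₁ : ℕ → ℂ) (hf₁0 : f₁ 0 = 1)
    (a₁ : ℕ → ℂ) (hdef : ∀ n : ℕ, a₁ n = f₁ (padicValNat p n)) :
    IsMultiplicativeSeq a₁ ∧
      (EventuallyPeriodicSeq f₁ → IsAutomatic p a₁) := by
  have : Fact p.Prime := ⟨hp⟩
  obtain rfl : a₁ = fun n => f₁ (padicValNat p n) := funext hdef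
  exact ⟨isMultiplicativeSeq_comp_padicValNat hf₁0, isAutomatic_comp_padicValNat⟩
end

section
/- Let p be a prime and let f₂ : ℕ → ℂ be eventually periodic and multiplicative. Then the sequence a₂ : ℕ → ℂ given by a₂(n) = f₂(n / p^{ν_p(n)}) for n ≥ 1 is multiplicative and p-automatic. -/
/-!
Write `n = p ^ ν_p(n) * m` with `p ∤ m`, so that `a₂ n = f₂ m`. Multiplicativity is inherited
from `f₂` because `m` is multiplicative in `n`. For the kernel, `p ^ k * n + r` with
`0 < r < p ^ k` loses exactly the factor `p ^ ν_p(r)`, leaving the affine expression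
`p ^ (k - ν_p(r)) * n + m_r`; and an eventually periodic sequence has only finitely many
affine reparametrisations `n ↦ f (b * n + s)`, since `b` and `s` only matter modulo the period
once they exceed the preperiod.
-/

open Nat

theorem Nat.ordCompl_pow_mul_add {p k r : ℕ} (hp : p.Prime) (n : ℕ) (hr : r ≠ 0)
    (hrk : r < p ^ k) :
    ordCompl[p] (p ^ k * n + r) = p ^ (k - r.factorization p) * n + ordCompl[p] r := by
  set j := r.factorization p
  have hjk : j < k :=
    (Nat.pow_lt_pow_iff_right hp.one_lt).mp ((ordProj_le p hr).trans_lt hrk)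
  have hsplit : p ^ k * n + r = p ^ j * (p ^ (k - j) * n + ordCompl[p] r) := by
    conv_lhs => rw [← ordProj_mul_ordCompl_eq_self r p]
    rw [mul_add, ← mul_assoc, ← pow_add, Nat.add_sub_cancel' hjk.le]
  have hp_dvd : p ∣ p ^ (k - j) * n := (dvd_pow_self p (Nat.sub_pos_of_lt hjk).ne').mul_right n
  rw [hsplit, ordCompl_pow_mul_of_not_dvd _ hp]
  exact (Nat.dvd_add_right hp_dvd).not.mpr (not_dvd_ordCompl hp hr)

theorem IsMultiplicativeSeq.comp_ordCompl {p : ℕ} {f a : ℕ → ℂ} (hf : IsMultiplicativeSeq f)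
    (ha : ∀ n, 1 ≤ n → a n = f (ordCompl[p] n)) : IsMultiplicativeSeq a := by
  refine ⟨by simpa [ha 1 le_rfl] using hf.1, fun m n hm hn hmn => ?_⟩
  rw [ha _ (Nat.mul_pos hm hn), ha m hm, ha n hn, ordCompl_mul]
  exact hf.2 _ _ (ordCompl_pos p (by omega)) (ordCompl_pos p (by omega))
    ((hmn.coprime_dvd_left (ordCompl_dvd m p)).coprime_dvd_right (ordCompl_dvd n p))

section EventuallyPeriodic

variable {f : ℕ → ℂ} {d n₀ : ℕ}

theorem apply_eq_of_modEq_of_periodic_from (hper : ∀ n ≥ n₀, f (n + d) = f n) {x y : ℕ}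
    (hx : n₀ ≤ x) (hy : n₀ ≤ y) (hxy : x ≡ y [MOD d]) : f x = f y := by
  have hg : Function.Periodic (fun m => f (n₀ + m)) d := fun m => by
    simpa only [add_assoc] using hper (n₀ + m) (by omega)
  have hshift : x - n₀ ≡ y - n₀ [MOD d] :=
    Nat.ModEq.add_left_cancel' n₀ (by rwa [Nat.add_sub_cancel' hx, Nat.add_sub_cancel' hy])
  have key := hg.map_mod_nat (x - n₀)
  rw [hshift, hg.map_mod_nat] at key
  simpa only [Nat.add_sub_cancel' hx, Nat.add_sub_cancel' hy] using key.symm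

theorem apply_affine_eq_of_modEq (hper : ∀ n ≥ n₀, f (n + d) = f n) {b b' s s' : ℕ}
    (hb : b' ≡ b [MOD d]) (hs : s' ≡ s [MOD d]) (hb' : b' = b ∨ n₀ ≤ b ∧ n₀ ≤ b')
    (hs' : s' = s ∨ n₀ ≤ s ∧ n₀ ≤ s') (n : ℕ) : f (b' * n + s') = f (b * n + s) := by
  have hprod : b' * n = b * n ∨ n₀ ≤ b * n ∧ n₀ ≤ b' * n := by
    rcases eq_or_ne n 0 with rfl | hn
    · simp
    rcases hb' with rfl | ⟨h, h'⟩
    · exact Or.inl rfl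
    · exact Or.inr ⟨h.trans (Nat.le_mul_of_pos_right b (by omega)),
        h'.trans (Nat.le_mul_of_pos_right b' (by omega))⟩
  have hcases : b' * n + s' = b * n + s ∨ n₀ ≤ b' * n + s' ∧ n₀ ≤ b * n + s := by omega
  rcases hcases with h | ⟨h, h'⟩
  · rw [h]
  · exact apply_eq_of_modEq_of_periodic_from hper h h' ((hb.mul_right n).add hs)

theorem EventuallyPeriodicSeq.finite_range_affine_comp (hf : EventuallyPeriodicSeq f) :
    (Set.range fun q : ℕ × ℕ => fun n => f (q.1 * n + q.2)).Finite := by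
  obtain ⟨d, hd, n₀, hper⟩ := hf
  have hreduce : ∀ x, ∃ x' < n₀ + d, x' ≡ x [MOD d] ∧ (x' = x ∨ n₀ ≤ x ∧ n₀ ≤ x') := by
    intro x
    by_cases hx : x < n₀
    · exact ⟨x, by omega, rfl, Or.inl rfl⟩
    · refine ⟨n₀ + (x - n₀) % d, by have := Nat.mod_lt (x - n₀) hd; omega, ?_,
        Or.inr ⟨by omega, by omega⟩⟩
      simpa only [Nat.add_sub_cancel' (not_lt.mp hx)] using (Nat.mod_modEq (x - n₀) d).add_left n₀
  refine (((Set.finite_Iio (n₀ + d)).prod (Set.finite_Iio (n₀ + d))).image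
    fun q : ℕ × ℕ => fun n => f (q.1 * n + q.2)).subset ?_
  rintro _ ⟨⟨b, s⟩, rfl⟩
  obtain ⟨b', hb'_lt, hb, hb'⟩ := hreduce b
  obtain ⟨s', hs'_lt, hs, hs'⟩ := hreduce s
  exact ⟨(b', s'), ⟨hb'_lt, hs'_lt⟩, funext (apply_affine_eq_of_modEq hper hb hs hb' hs')⟩

end EventuallyPeriodic

theorem EventuallyPeriodicSeq.isAutomatic_of_eq_comp_ordCompl {p : ℕ} (hp : p.Prime)
    {f a : ℕ → ℂ} (hf : EventuallyPeriodicSeq f) (ha : ∀ n, 1 ≤ n → a n = f (ordCompl[p] n)) :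
    IsAutomatic p a := by
  refine (hf.finite_range_affine_comp.insert a).subset ?_
  rintro _ ⟨k, r, hrk, rfl⟩
  rcases eq_or_ne r 0 with rfl | hr
  · refine Or.inl (funext fun n => ?_)
    rcases eq_or_ne n 0 with rfl | hn
    · simp
    rw [add_zero, ha _ (Nat.mul_pos (pow_pos hp.pos k) (by omega)), ha n (by omega),
      ordCompl_self_pow_mul _ _ hp]
  · refine Or.inr ⟨(p ^ (k - r.factorization p), ordCompl[p] r), funext fun n => ?_⟩
    rw [ha _ (by omega), Nat.ordCompl_pow_mul_add hp n hr hrk]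

theorem stmt_4 (p : ℕ) (hp : p.Prime)
    (f₂ : ℕ → ℂ) (hf₂ : EventuallyPeriodicSeq f₂) (hf₂m : IsMultiplicativeSeq f₂)
    (a₂ : ℕ → ℂ)
    (hdef : ∀ n : ℕ, 1 ≤ n → a₂ n = f₂ (n / p ^ padicValNat p n)) :
    IsMultiplicativeSeq a₂ ∧ IsAutomatic p a₂ := by
  have ha : ∀ n, 1 ≤ n → a₂ n = f₂ (ordCompl[p] n) := fun n hn => by
    rw [hdef n hn, factorization_def n hp]
  exact ⟨hf₂m.comp_ordCompl ha, hf₂.isAutomatic_of_eq_comp_ordCompl hp ha⟩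
end

section
/- Let f : ℕ → ℂ be eventually periodic and multiplicative. Then either f is periodic on the positive integers (there exists d ≥ 1 with f(n+d) = f(n) for all n ≥ 1), or f is finitely supported (the set {n ≥ 1 : f(n) ≠ 0} is finite). -/
/-!
If `f` has period `d` from `n₀` on and `f m₀ ≠ 0` for some `m₀ ≥ n₀`, put `v = gcd(m₀, d)`.
Since `m₀ / v` is a unit modulo `d / v`, it lifts to arbitrarily large `b` coprime to `d` and to any
given `N`; then `v * b ≡ m₀ (mod d)`, so `f v * f b = f (v * b) = f m₀ ≠ 0`. Taking `N = n (n + d)`,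
`f b * f (n + d) = f (b n + b d) = f (b n) = f b * f n`, and `f b` cancels.
-/

theorem Nat.exists_coprime_modEq_ge {e M u : ℕ} (heM : e ∣ M) (hM : M ≠ 0)
    (hu : u.Coprime e) (B : ℕ) : ∃ b, B ≤ b ∧ b ≡ u [MOD e] ∧ b.Coprime M := by
  have : NeZero M := ⟨hM⟩
  obtain ⟨w, hw⟩ := ZMod.unitsMap_surjective heM (ZMod.unitOfCoprime u hu)
  have hwu : (w : ZMod M).val ≡ u [MOD e] := by
    rw [← ZMod.natCast_eq_natCast_iff, ← ZMod.cast_eq_val]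
    simpa [ZMod.unitsMap_def] using congrArg Units.val hw
  refine ⟨(w : ZMod M).val + M * B, ?_, ?_, ?_⟩
  · nlinarith [Nat.one_le_iff_ne_zero.mpr hM]
  · exact (Nat.ModEq.of_dvd heM (Nat.add_mul_mod_self_left _ M B)).trans hwu
  · exact (Nat.coprime_add_mul_left_left _ _ _).mpr (ZMod.val_coe_unit_coprime w)

section

variable {α : Type*} {f : ℕ → α} {d n₀ : ℕ}

theorem apply_add_mul_eq_apply (hper : ∀ n ≥ n₀, f (n + d) = f n) {n : ℕ} (hn : n₀ ≤ n)
    (k : ℕ) : f (n + d * k) = f n := by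
  induction k with
  | zero => simp
  | succ k ih => rw [mul_add_one, ← add_assoc, hper _ (by omega), ih]

theorem apply_eq_apply_of_modEq (hper : ∀ n ≥ n₀, f (n + d) = f n) {m n : ℕ}
    (hm : n₀ ≤ m) (hn : n₀ ≤ n) (hmn : m ≡ n [MOD d]) : f m = f n := by
  wlog hle : m ≤ n generalizing m n
  · exact (this hn hm hmn.symm (by omega)).symm
  obtain ⟨k, hk⟩ := (Nat.modEq_iff_dvd' hle).mp hmn
  obtain rfl : n = m + d * k := by omega
  exact (apply_add_mul_eq_apply hper hm k).symm

end

section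

variable {M₀ : Type*} [MulZeroClass M₀] {f : ℕ → M₀} {d n₀ m₀ : ℕ}

theorem exists_coprime_ge_apply_ne_zero
    (hmul : ∀ m n, 1 ≤ m → 1 ≤ n → m.Coprime n → f (m * n) = f m * f n)
    (hper : ∀ n ≥ n₀, f (n + d) = f n) (hd : d ≠ 0) (hm₀ : n₀ ≤ m₀) (hfm₀ : f m₀ ≠ 0)
    {N : ℕ} (hN : N ≠ 0) (B : ℕ) : ∃ b, B ≤ b ∧ b.Coprime N ∧ f b ≠ 0 := by
  have hv : 0 < m₀.gcd d := Nat.gcd_pos_of_pos_right _ (Nat.pos_of_ne_zero hd)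
  obtain ⟨b, hBb, hbu, hbN⟩ := Nat.exists_coprime_modEq_ge
    (dvd_mul_of_dvd_left (Nat.div_dvd_of_dvd (Nat.gcd_dvd_right m₀ d)) N) (mul_ne_zero hd hN)
    (Nat.coprime_div_gcd_div_gcd hv) (B + n₀ + 1)
  have hvb : m₀.gcd d * b ≡ m₀ [MOD d] := by
    have := hbu.mul_left' (m₀.gcd d)
    rwa [Nat.mul_div_cancel' (Nat.gcd_dvd_left m₀ d), Nat.mul_div_cancel' (Nat.gcd_dvd_right m₀ d)]
      at this
  have hbd : b.Coprime d := hbN.coprime_dvd_right (dvd_mul_right d N)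
  have hfvb : f (m₀.gcd d) * f b = f m₀ := by
    rw [← hmul _ b hv (by omega) (hbd.coprime_dvd_right (Nat.gcd_dvd_right m₀ d)).symm,
      apply_eq_apply_of_modEq hper (by nlinarith) hm₀ hvb]
  exact ⟨b, by omega, hbN.coprime_dvd_right (dvd_mul_left N d),
    fun hfb => hfm₀ (by rw [← hfvb, hfb, mul_zero])⟩

theorem apply_add_eq_apply_of_apply_ne_zero [IsLeftCancelMulZero M₀]
    (hmul : ∀ m n, 1 ≤ m → 1 ≤ n → m.Coprime n → f (m * n) = f m * f n)
    (hper : ∀ n ≥ n₀, f (n + d) = f n) (hd : d ≠ 0) (hm₀ : n₀ ≤ m₀) (hfm₀ : f m₀ ≠ 0)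
    {n : ℕ} (hn : 1 ≤ n) : f (n + d) = f n := by
  obtain ⟨b, hb, hbN, hfb⟩ := exists_coprime_ge_apply_ne_zero hmul hper hd hm₀ hfm₀
    (N := n * (n + d)) (by positivity) (n₀ + 1)
  apply mul_left_cancel₀ hfb
  calc f b * f (n + d)
      = f (b * (n + d)) :=
        (hmul b _ (by omega) (by omega) (hbN.coprime_dvd_right (dvd_mul_left _ n))).symm
    _ = f (b * n) := apply_eq_apply_of_modEq hper (by nlinarith) (by nlinarith)
        (by rw [mul_add]; exact Nat.add_mul_mod_self_right _ _ _)
    _ = f b * f n := hmul b n (by omega) hn (hbN.coprime_dvd_right (dvd_mul_right n _))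

end

theorem stmt_5 (f : ℕ → ℂ) (hep : EventuallyPeriodicSeq f)
    (hm : IsMultiplicativeSeq f) :
    (∃ d : ℕ, 1 ≤ d ∧ ∀ n : ℕ, 1 ≤ n → f (n + d) = f n) ∨
      {n : ℕ | 1 ≤ n ∧ f n ≠ 0}.Finite := by
  obtain ⟨d, hd, n₀, hper⟩ := hep
  refine or_iff_not_imp_right.mpr fun hinf => ?_
  obtain ⟨m₀, ⟨-, hfm₀⟩, hm₀⟩ := Set.Infinite.exists_gt hinf n₀
  exact ⟨d, hd, fun n => apply_add_eq_apply_of_apply_ne_zero hm.2 hper (by omega) hm₀.le hfm₀⟩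
end

section
/- Let p be a prime and let f : ℕ → ℂ be p-automatic. Then the sequence f̃ : ℕ → ℂ given by f̃(n) = f(n / p^{ν_p(n)}) for n ≥ 1 (and f̃(0) = f(0)) is also p-automatic. -/
theorem stmt_8 (p : ℕ) (hp : p.Prime) (f : ℕ → ℂ) (haut : IsAutomatic p f) :
    IsAutomatic p (fun n => f (n / p ^ padicValNat p n)) := by
  haveI : Fact p.Prime := ⟨hp⟩
  apply Set.Finite.subset (haut.insert (fun n => f (n / p ^ padicValNat p n)))
  rintro g ⟨k, r, hr, rfl⟩
  rw [Set.mem_insert_iff]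
  rcases Nat.eq_zero_or_pos r with rfl | hr0
  · left
    funext n
    rcases Nat.eq_zero_or_pos n with rfl | hn
    · simp
    · simp only [Nat.add_zero]
      have hv : padicValNat p (p ^ k * n) = k + padicValNat p n := by
        rw [padicValNat.mul (pow_ne_zero _ hp.ne_zero) hn.ne', padicValNat.prime_pow]
      rw [hv, pow_add, Nat.mul_div_mul_left _ _ (pow_pos hp.pos k)]
  · right
    set a := padicValNat p r with ha
    set s := r / p ^ a with hsdef
    have hpa : p ^ a ∣ r := pow_padicValNat_dvd
    have hs : r = p ^ a * s := (Nat.mul_div_cancel' hpa).symm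
    have hak : a < k := by
      by_contra h
      push_neg at h
      have h1 : p ^ k ≤ p ^ a := Nat.pow_le_pow_right hp.pos h
      have h2 : p ^ a ≤ r := Nat.le_of_dvd hr0 hpa
      omega
    have hps : ¬ p ∣ s := by
      have h := Nat.not_dvd_ordCompl hp hr0.ne'
      rwa [Nat.factorization_def r hp] at h
    have hs0 : s ≠ 0 := by rintro h; exact hps (h ▸ dvd_zero p)
    refine ⟨k - a, s, ?_, ?_⟩
    · have h1 : r < p ^ a * p ^ (k - a) := by
        rw [← pow_add, Nat.add_sub_cancel' hak.le]; exact hr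
      rw [hs] at h1
      exact lt_of_mul_lt_mul_left h1 (Nat.zero_le _)
    · funext n
      have hkey : p ^ k * n + r = p ^ a * (p ^ (k - a) * n + s) := by
        rw [hs, Nat.mul_add, ← Nat.mul_assoc, ← pow_add, Nat.add_sub_cancel' hak.le]
      have hm0 : p ^ (k - a) * n + s ≠ 0 :=
        (Nat.add_pos_right _ (Nat.pos_of_ne_zero hs0)).ne'
      have hpm : ¬ p ∣ (p ^ (k - a) * n + s) := by
        intro h
        exact hps ((Nat.dvd_add_right
          (dvd_mul_of_dvd_left (dvd_pow_self p (Nat.sub_ne_zero_of_lt hak)) n)).mp h)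
      have hv : padicValNat p (p ^ k * n + r) = a := by
        rw [hkey, padicValNat.mul (pow_ne_zero _ hp.ne_zero) hm0, padicValNat.prime_pow,
          padicValNat.eq_zero_of_not_dvd hpm, add_zero]
      show f ((p ^ k * n + r) / p ^ padicValNat p (p ^ k * n + r)) = f (p ^ (k - a) * n + s)
      rw [hv, hkey, Nat.mul_div_cancel_left _ (pow_pos hp.pos a)]
end

section
/- (Pumping lemma for automatic sequences.) Let λ ≥ 2 be an integer and let f : ℕ → ℂ be λ-automatic. Then there exists n₀ > 0 such that for every integer n ≥ n₀ there exist integers ℓ₁, ℓ₃ ≥ 0, ℓ₂ ≥ 1 and natural numbers x < λ^{ℓ₃}, y < λ^{ℓ₂}, z < λ^{ℓ₁} such that n = x·λ^{ℓ₁+ℓ₂} + y·λ^{ℓ₁} + z, and f(n) = f( x·λ^{ℓ₁ + k·ℓ₂} + y·λ^{ℓ₁}·(λ^{k·ℓ₂} − 1)/(λ^{ℓ₂} − 1) + z ) for all k ≥ 0. -/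
open Finset

theorem IsAutomatic.exists_lt_kernel_eq {lam : ℕ} (hlam : 0 < lam) {f : ℕ → ℂ}
    (haut : IsAutomatic lam f) (n : ℕ) :
    ∃ i j, i < j ∧ ∀ m, f (lam ^ i * m + n % lam ^ i) = f (lam ^ j * m + n % lam ^ j) := by
  have := haut.to_subtype
  obtain ⟨i, j, hne, hij⟩ := Finite.exists_ne_map_eq_of_infinite (α := ℕ)
    (fun j => (⟨fun m => f (lam ^ j * m + n % lam ^ j),
      j, n % lam ^ j, Nat.mod_lt _ (pow_pos hlam _), rfl⟩ :
        {g : ℕ → ℂ | ∃ k r : ℕ, r < lam ^ k ∧ g = fun m => f (lam ^ k * m + r)}))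
  have hfun := congrArg Subtype.val hij
  rcases hne.lt_or_gt with h | h
  exacts [⟨i, j, h, congrFun hfun⟩, ⟨j, i, h, fun m => (congrFun hfun m).symm⟩]

theorem apply_geom_sum_pump_eq {α : Type*} (f : ℕ → α) {a b y z : ℕ}
    (h : ∀ m, f (a * m + z) = f (a * b * m + (y * a + z))) (x k : ℕ) :
    f (a * (x * b ^ k + y * ∑ t ∈ range k, b ^ t) + z) = f (a * x + z) := by
  induction k with
  | zero => simp
  | succ k ih =>
    have hstep : a * (x * b ^ (k + 1) + y * ∑ t ∈ range (k + 1), b ^ t) + z =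
        a * b * (x * b ^ k + y * ∑ t ∈ range k, b ^ t) + (y * a + z) := by
      rw [geom_sum_succ, pow_succ]
      ring
    rw [hstep, ← h, ih]

theorem exists_pump_of_kernel_eq {lam : ℕ} (hlam : 2 ≤ lam) {f : ℕ → ℂ} {n i j : ℕ} (hij : i < j)
    (hker : ∀ m, f (lam ^ i * m + n % lam ^ i) = f (lam ^ j * m + n % lam ^ j)) :
    ∃ l₁ l₂ l₃ x y z : ℕ,
      1 ≤ l₂ ∧ x < lam ^ l₃ ∧ y < lam ^ l₂ ∧ z < lam ^ l₁ ∧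
      n = x * lam ^ (l₁ + l₂) + y * lam ^ l₁ + z ∧
      ∀ k : ℕ,
        f n = f (x * lam ^ (l₁ + k * l₂) +
          y * lam ^ l₁ * ((lam ^ (k * l₂) - 1) / (lam ^ l₂ - 1)) + z) := by
  set l := j - i
  set a := lam ^ i
  set b := lam ^ l
  have hb : 2 ≤ b := hlam.trans (Nat.le_self_pow (by omega) lam)
  have hab : lam ^ j = a * b := by rw [← pow_add]; congr 1; omega
  set z := n % a
  set y := n / a % b
  set x := n / a / b
  have hn : n = a * (x * b + y) + z := by
    rw [mul_comm x b, Nat.div_add_mod, Nat.div_add_mod]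
  have h : ∀ m, f (a * m + z) = f (a * b * m + (y * a + z)) := fun m => by
    rw [hker, hab, Nat.mod_mul, add_comm (n % a), mul_comm a y]
  refine ⟨i, l, x, x, y, z, by omega, Nat.lt_pow_self (by omega), Nat.mod_lt _ (by omega),
    Nat.mod_lt _ (pow_pos (by omega) _), by rw [hn, pow_add]; ring, fun k => ?_⟩
  have hpumped : x * lam ^ (i + k * l) + y * a * ((lam ^ (k * l) - 1) / (lam ^ l - 1)) + z =
      a * (x * b ^ k + y * ∑ t ∈ range k, b ^ t) + z := by
    rw [mul_comm k l, pow_mul, pow_add, ← Nat.geomSum_eq hb]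
    ring
  have hn₁ : n = a * (x * b ^ 1 + y * ∑ t ∈ range 1, b ^ t) + z := by simpa using hn
  rw [hpumped, apply_geom_sum_pump_eq f h, hn₁, apply_geom_sum_pump_eq f h]

theorem stmt_9 (lam : ℕ) (hlam : 2 ≤ lam) (f : ℕ → ℂ) (haut : IsAutomatic lam f) :
    ∃ n₀ : ℕ, 0 < n₀ ∧ ∀ n ≥ n₀, ∃ l₁ l₂ l₃ x y z : ℕ,
      1 ≤ l₂ ∧ x < lam ^ l₃ ∧ y < lam ^ l₂ ∧ z < lam ^ l₁ ∧
      n = x * lam ^ (l₁ + l₂) + y * lam ^ l₁ + z ∧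
      ∀ k : ℕ,
        f n = f (x * lam ^ (l₁ + k * l₂) +
          y * lam ^ l₁ * ((lam ^ (k * l₂) - 1) / (lam ^ l₂ - 1)) + z) := by
  refine ⟨1, one_pos, fun n _ => ?_⟩
  obtain ⟨i, j, hij, hker⟩ := haut.exists_lt_kernel_eq (by omega) n
  exact exists_pump_of_kernel_eq hlam hij hker
end

section
/- Let p be a prime, α ≥ 1 an integer, and let f : ℕ → ℂ be a sequence such that f(p^γ) = 0 for all sufficiently large γ. Let χ : ℕ → ℂ be a Dirichlet character of modulus p^α. Then the sequence n ↦ f(p^{ν_p(n)}) · χ(n / p^{ν_p(n)}) is periodic on the positive integers: there exists d ≥ 1 such that this sequence takes the same value at n and n + d for all n ≥ 1. -/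
lemma chi_per {k : ℕ} {χ : ℕ → ℂ} (hper : ∀ n, χ (n + k) = χ n) :
    ∀ c m, χ (m + c * k) = χ m := by
  intro c
  induction c with
  | zero => simp
  | succ c ih =>
    intro m
    have : m + (c + 1) * k = (m + c * k) + k := by ring
    rw [this, hper, ih]

theorem stmt_11 (p : ℕ) (hp : p.Prime) (α : ℕ) (hα : 1 ≤ α)
    (f : ℕ → ℂ) (hzero : ∃ γ₀ : ℕ, ∀ γ ≥ γ₀, f (p ^ γ) = 0)
    (χ : ℕ → ℂ) (hχ : IsDirichletCharacterSeq (p ^ α) χ) :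
    ∃ d : ℕ, 1 ≤ d ∧ ∀ n : ℕ, 1 ≤ n →
      f (p ^ padicValNat p (n + d)) * χ ((n + d) / p ^ padicValNat p (n + d)) =
        f (p ^ padicValNat p n) * χ (n / p ^ padicValNat p n) := by
  obtain ⟨γ₀, hγ⟩ := hzero
  haveI : Fact p.Prime := ⟨hp⟩
  have hp1 : 1 ≤ p := hp.one_lt.le
  refine ⟨p ^ (γ₀ + α), Nat.one_le_pow _ _ hp.pos, ?_⟩
  intro n hn
  have hn0 : n ≠ 0 := by omega
  have hnd0 : n + p ^ (γ₀ + α) ≠ 0 := by positivity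
  set v := padicValNat p n with hv
  by_cases hcase : γ₀ ≤ v
  · have h1 : p ^ γ₀ ∣ n := dvd_trans (pow_dvd_pow p hcase) (pow_padicValNat_dvd)
    have h2 : p ^ γ₀ ∣ n + p ^ (γ₀ + α) := by
      exact dvd_add h1 (pow_dvd_pow p (Nat.le_add_right _ _))
    have h3 : γ₀ ≤ padicValNat p (n + p ^ (γ₀ + α)) :=
      (padicValNat_dvd_iff_le hnd0).mp h2
    rw [hγ _ h3, hγ _ hcase, zero_mul, zero_mul]
  · push_neg at hcase
    set m := n / p ^ v with hm
    have hdvd : p ^ v ∣ n := pow_padicValNat_dvd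
    have hnm : n = p ^ v * m := (Nat.mul_div_cancel' hdvd).symm
    have hm0 : m ≠ 0 := by
      intro h; rw [h, mul_zero] at hnm; exact hn0 hnm
    have hpm : ¬ p ∣ m := by
      intro h
      obtain ⟨c, hc⟩ := h
      have : p ^ (v + 1) ∣ n := ⟨c, by rw [hnm, hc, pow_succ]; ring⟩
      have := (padicValNat_dvd_iff_le hn0).mp this
      omega
    set e := γ₀ + α - v with he
    have hev : v + e = γ₀ + α := by omega
    have heα : α + 1 ≤ e := by omega
    have hsum : n + p ^ (γ₀ + α) = p ^ v * (m + p ^ e) := by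
      rw [hnm, ← hev, pow_add]; ring
    have hpme : ¬ p ∣ (m + p ^ e) := by
      intro h
      have h2 : p ∣ p ^ e := dvd_pow_self p (by omega)
      exact hpm ((Nat.dvd_add_right h2).mp (by rwa [add_comm] at h))
    have hval : padicValNat p (n + p ^ (γ₀ + α)) = v := by
      rw [hsum, padicValNat.mul (by positivity) (by positivity),
        padicValNat.prime_pow, padicValNat.eq_zero_of_not_dvd hpme, add_zero]
    have hdiv : (n + p ^ (γ₀ + α)) / p ^ v = m + p ^ e := by
      rw [hsum, Nat.mul_div_cancel_left _ (by positivity)]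
    rw [hval, hdiv]
    congr 1
    have : m + p ^ e = m + p ^ (e - α) * p ^ α := by
      rw [← pow_add, Nat.sub_add_cancel (by omega)]
    rw [this, chi_per hχ.1]
end

section
/- Let h, λ ≥ 1 be coprime integers with hλ ≥ 2, let a : ℕ → ℂ be multiplicative, and let χ : ℕ → ℂ be a Dirichlet character of modulus hλ such that a(n) = χ(n) for all n ≥ 1 coprime to hλ. For each prime p dividing hλ write α(p) = ν_p(hλ), and suppose we are given: a Dirichlet character χ_p of modulus p^{α(p)} for each prime p ∣ hλ such that χ(n) = ∏_{p ∣ hλ} χ_p(n) for all n; and for each prime p ∣ hλ an integer m_p with m_p ≡ 1 (mod p^{α(p)}) and m_p ≡ p (mod hλ/p^{α(p)}). Then for all n ≥ 1: a(n) = ∏_{p ∣ hλ} χ_p(n / p^{ν_p(n)}) · a(p^{ν_p(n)}) / χ(m_p)^{ν_p(n)}, where the product runs over the prime divisors of hλ (note χ(m_p) ≠ 0 since m_p is coprime to hλ). -/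
/-!
Write `n = u · ∏_{p ∣ hλ} p ^ ν_p(n)` with `u` coprime to `hλ` and put `M = ∏_p m_p ^ ν_p(n)`.
Modulo `p ^ α(p)` we have `m_p ≡ 1` and `m_q ≡ q` for `q ≠ p`, so the `p`-free part
`n / p ^ ν_p(n) = u ∏_{q ≠ p} q ^ ν_q(n)` is congruent to `u M`. Hence
`∏_p χ_p(n / p ^ ν_p(n)) = ∏_p χ_p(u M) = χ(u) ∏_p χ(m_p) ^ ν_p(n)`, while multiplicativity gives
`a(n) = a(u) ∏_p a(p ^ ν_p(n)) = χ(u) ∏_p a(p ^ ν_p(n))`.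
-/

open Finset

namespace IsDirichletCharacterSeq

variable {k : ℕ} {χ : ℕ → ℂ}

theorem map_one (hχ : IsDirichletCharacterSeq k χ) : χ 1 = 1 := by
  have h1 : χ 1 ≠ 0 := by simp [hχ.2.2 1]
  have h11 : χ 1 * χ 1 = χ 1 * 1 := by rw [mul_one, ← hχ.2.1, mul_one]
  exact mul_left_cancel₀ h1 h11

def toMonoidHom (hχ : IsDirichletCharacterSeq k χ) : ℕ →* ℂ where
  toFun := χ
  map_one' := hχ.map_one
  map_mul' := hχ.2.1

theorem map_pow (hχ : IsDirichletCharacterSeq k χ) (x e : ℕ) : χ (x ^ e) = χ x ^ e :=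
  _root_.map_pow hχ.toMonoidHom x e

theorem map_prod (hχ : IsDirichletCharacterSeq k χ) {ι : Type*} (s : Finset ι) (f : ι → ℕ) :
    χ (∏ i ∈ s, f i) = ∏ i ∈ s, χ (f i) :=
  _root_.map_prod hχ.toMonoidHom f s

theorem eq_of_modEq (hχ : IsDirichletCharacterSeq k χ) {x y : ℕ} (hxy : x ≡ y [MOD k]) :
    χ x = χ y := by
  have hper : Function.Periodic χ k := hχ.1
  rw [← hper.map_mod_nat x, ← hper.map_mod_nat y, hxy]

theorem ne_zero_of_coprime (hχ : IsDirichletCharacterSeq k χ) {n : ℕ} (hn : n.Coprime k) :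
    χ n ≠ 0 := by
  rw [Ne, hχ.2.2 n, hn.gcd_eq_one]
  exact lt_irrefl 1

end IsDirichletCharacterSeq

namespace IsMultiplicativeSeq

variable {a : ℕ → ℂ}

theorem map_mul_of_coprime (ha : IsMultiplicativeSeq a) {m n : ℕ} (hmn : m.Coprime n) :
    a (m * n) = a m * a n := by
  rcases Nat.eq_zero_or_pos m with rfl | hm
  · rw [(Nat.coprime_zero_left n).mp hmn, ha.1, mul_one, mul_one]
  rcases Nat.eq_zero_or_pos n with rfl | hn
  · rw [(Nat.coprime_zero_right m).mp hmn, ha.1, one_mul, one_mul]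
  exact ha.2 m n hm hn hmn

open scoped Function in
theorem map_prod (ha : IsMultiplicativeSeq a) {ι : Type*} (s : Finset ι) (f : ι → ℕ)
    (hs : (s : Set ι).Pairwise (Nat.Coprime on f)) :
    a (∏ i ∈ s, f i) = ∏ i ∈ s, a (f i) := by
  classical
  induction s using Finset.induction_on with
  | empty => simpa using ha.1
  | insert i s his ih =>
    rw [coe_insert, Set.pairwise_insert_of_symm] at hs
    rw [prod_insert his, prod_insert his, ha.map_mul_of_coprime, ih hs.1]
    exact Nat.Coprime.prod_right fun j hj => hs.2 j hj (ne_of_mem_of_not_mem hj his).symm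

end IsMultiplicativeSeq

namespace Nat

open scoped Function in
theorem prod_dvd_of_pairwise_coprime {ι : Type*} {s : Finset ι} {f : ι → ℕ} {n : ℕ}
    (hs : (s : Set ι).Pairwise (Coprime on f)) (hdvd : ∀ i ∈ s, f i ∣ n) :
    ∏ i ∈ s, f i ∣ n := by
  have hint : ∏ i ∈ s, (f i : ℤ) ∣ n :=
    prod_dvd_of_coprime (hs.mono' fun _ _ h => isCoprime_iff_coprime.mpr h)
      fun i hi => Int.natCast_dvd_natCast.mpr (hdvd i hi)
  exact_mod_cast hint

open scoped Function in
theorem pairwise_coprime_pow_primes {s : Finset ℕ} (hs : ∀ p ∈ s, p.Prime) (e : ℕ → ℕ) :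
    (s : Set ℕ).Pairwise (Coprime on fun p => p ^ e p) :=
  fun p hp q hq hpq => coprime_pow_primes _ _ (hs p hp) (hs q hq) hpq

theorem prod_pow_padicValNat_dvd {s : Finset ℕ} (hs : ∀ p ∈ s, p.Prime) (n : ℕ) :
    ∏ p ∈ s, p ^ padicValNat p n ∣ n :=
  prod_dvd_of_pairwise_coprime (pairwise_coprime_pow_primes hs _) fun _ _ => pow_padicValNat_dvd

theorem coprime_div_pow_padicValNat {p : ℕ} (hp : p.Prime) {n : ℕ} (hn : n ≠ 0) :
    Coprime p (n / p ^ padicValNat p n) := by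
  rw [← factorization_def n hp]
  exact coprime_ordCompl hp hn

theorem coprime_div_prod_pow_padicValNat {s : Finset ℕ} (hs : ∀ p ∈ s, p.Prime) {n : ℕ}
    (hn : n ≠ 0) {p : ℕ} (hp : p ∈ s) :
    Coprime p (n / ∏ q ∈ s, q ^ padicValNat q n) := by
  refine (coprime_div_pow_padicValNat (hs p hp) hn).coprime_dvd_right (dvd_div_of_mul_dvd ?_)
  calc p ^ padicValNat p n * (n / ∏ q ∈ s, q ^ padicValNat q n)
      ∣ (∏ q ∈ s, q ^ padicValNat q n) * (n / ∏ q ∈ s, q ^ padicValNat q n) :=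
        mul_dvd_mul_right (dvd_prod_of_mem _ hp) _
    _ = n := Nat.mul_div_cancel' (prod_pow_padicValNat_dvd hs n)

theorem coprime_div_prod_primeFactors_pow_padicValNat {n N : ℕ} (hn : n ≠ 0) (hN : N ≠ 0) :
    Coprime (n / ∏ p ∈ N.primeFactors, p ^ padicValNat p n) N :=
  Coprime.symm <| coprime_of_dvd fun _ hp hpN =>
    (hp.coprime_iff_not_dvd).mp <| coprime_div_prod_pow_padicValNat
      (fun _ => prime_of_mem_primeFactors) hn (mem_primeFactors.mpr ⟨hp, hpN, hN⟩)

theorem pow_padicValNat_dvd_div_pow_padicValNat {p q : ℕ} (hp : p.Prime) (hq : q.Prime)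
    (hpq : p ≠ q) (N : ℕ) : p ^ padicValNat p N ∣ N / q ^ padicValNat q N :=
  dvd_div_of_mul_dvd <| (coprime_pow_primes _ _ hq hp hpq.symm).mul_dvd_of_dvd_of_dvd
    pow_padicValNat_dvd pow_padicValNat_dvd

theorem coprime_of_modEq_one_of_modEq_self {p N x : ℕ} (hp : p.Prime) (hN : N ≠ 0)
    (h1 : x ≡ 1 [MOD p ^ padicValNat p N]) (hxp : x ≡ p [MOD N / p ^ padicValNat p N]) :
    Coprime x N := by
  rw [← Nat.mul_div_cancel' (pow_padicValNat_dvd : p ^ padicValNat p N ∣ N)]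
  refine Coprime.mul_right ?_ ?_
  · rw [Coprime, h1.gcd_eq, gcd_one_left]
  · rw [Coprime, hxp.gcd_eq]
    exact coprime_div_pow_padicValNat hp hN

theorem prod_erase_pow_modEq_prod_pow {s : Finset ℕ} {p K : ℕ} {m : ℕ → ℕ} (e : ℕ → ℕ)
    (hp : p ∈ s) (hmp : m p ≡ 1 [MOD K]) (hm : ∀ q ∈ s, q ≠ p → m q ≡ q [MOD K]) :
    ∏ q ∈ s.erase p, q ^ e q ≡ ∏ q ∈ s, m q ^ e q [MOD K] := by
  rw [← mul_prod_erase s _ hp]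
  calc ∏ q ∈ s.erase p, q ^ e q = 1 ^ e p * ∏ q ∈ s.erase p, q ^ e q := by rw [one_pow, one_mul]
    _ ≡ m p ^ e p * ∏ q ∈ s.erase p, m q ^ e q [MOD K] :=
      (hmp.symm.pow _).mul <| ModEq.prod fun q hq =>
        ((hm q (mem_of_mem_erase hq) (ne_of_mem_erase hq)).symm.pow _)

theorem div_pow_padicValNat_modEq {N n p : ℕ} {m : ℕ → ℕ}
    (hm : ∀ q ∈ N.primeFactors, m q ≡ 1 [MOD q ^ padicValNat q N] ∧
      m q ≡ q [MOD N / q ^ padicValNat q N])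
    (hp : p ∈ N.primeFactors) :
    n / p ^ padicValNat p n ≡
      n / (∏ q ∈ N.primeFactors, q ^ padicValNat q n) *
        ∏ q ∈ N.primeFactors, m q ^ padicValNat q n [MOD p ^ padicValNat p N] := by
  have hn : n / p ^ padicValNat p n =
      n / (∏ q ∈ N.primeFactors, q ^ padicValNat q n) *
        ∏ q ∈ N.primeFactors.erase p, q ^ padicValNat q n := by
    refine Nat.div_eq_of_eq_mul_right (pow_pos (prime_of_mem_primeFactors hp).pos _) ?_
    rw [mul_left_comm, mul_prod_erase _ (fun q => q ^ padicValNat q n) hp,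
      Nat.div_mul_cancel (prod_pow_padicValNat_dvd (fun _ => prime_of_mem_primeFactors) n)]
  rw [hn]
  refine ModEq.mul_left _ (prod_erase_pow_modEq_prod_pow _ hp (hm p hp).1 fun q hq hqp => ?_)
  exact (hm q hq).2.of_dvd <| pow_padicValNat_dvd_div_pow_padicValNat
    (prime_of_mem_primeFactors hp) (prime_of_mem_primeFactors hq) hqp.symm N

end Nat

theorem stmt_12_general (h lam : ℕ) (hh : 1 ≤ h) (hlam : 1 ≤ lam)
    (a : ℕ → ℂ) (ha : IsMultiplicativeSeq a)
    (χ : ℕ → ℂ) (hχ : IsDirichletCharacterSeq (h * lam) χ)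
    (haχ : ∀ n : ℕ, 1 ≤ n → Nat.Coprime n (h * lam) → a n = χ n)
    (χp : ℕ → ℕ → ℂ)
    (hχp : ∀ p ∈ (h * lam).primeFactors,
      IsDirichletCharacterSeq (p ^ padicValNat p (h * lam)) (χp p))
    (hprod : ∀ n : ℕ, χ n = ∏ p ∈ (h * lam).primeFactors, χp p n)
    (m : ℕ → ℕ)
    (hm : ∀ p ∈ (h * lam).primeFactors,
      m p ≡ 1 [MOD p ^ padicValNat p (h * lam)] ∧
      m p ≡ p [MOD (h * lam) / p ^ padicValNat p (h * lam)]) :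
    ∀ n : ℕ, 1 ≤ n →
      a n = ∏ p ∈ (h * lam).primeFactors,
        χp p (n / p ^ padicValNat p n) * a (p ^ padicValNat p n) /
          (χ (m p)) ^ padicValNat p n := by
  intro n hn
  have hN : h * lam ≠ 0 := by positivity
  set P := (h * lam).primeFactors
  have hP : ∀ p ∈ P, p.Prime := fun _ => Nat.prime_of_mem_primeFactors
  set Q := ∏ p ∈ P, p ^ padicValNat p n
  set u := n / Q
  have hnQu : n = Q * u := (Nat.mul_div_cancel' (Nat.prod_pow_padicValNat_dvd hP n)).symm
  have hu : u.Coprime (h * lam) := Nat.coprime_div_prod_primeFactors_pow_padicValNat (by omega) hN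
  have hu_pos : 1 ≤ u := Nat.pos_of_ne_zero fun hu0 => by rw [hu0, mul_zero] at hnQu; omega
  have ha_n : a n = χ u * ∏ p ∈ P, a (p ^ padicValNat p n) :=
    calc a n = a u * a Q := by
          rw [← ha.map_mul_of_coprime, mul_comm, ← hnQu]
          exact Nat.Coprime.prod_right fun p hp =>
            (hu.coprime_dvd_right (Nat.dvd_of_mem_primeFactors hp)).pow_right _
      _ = χ u * ∏ p ∈ P, a (p ^ padicValNat p n) := by
          rw [haχ u hu_pos hu, ha.map_prod _ _ (Nat.pairwise_coprime_pow_primes hP _)]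
  have hχp_n : ∏ p ∈ P, χp p (n / p ^ padicValNat p n) =
      χ u * ∏ p ∈ P, χ (m p) ^ padicValNat p n := by
    rw [prod_congr rfl fun p hp => (hχp p hp).eq_of_modEq (Nat.div_pow_padicValNat_modEq hm hp),
      ← hprod, hχ.2.1, hχ.map_prod]
    simp only [hχ.map_pow]
    rfl
  have hχm : ∏ p ∈ P, χ (m p) ^ padicValNat p n ≠ 0 :=
    prod_ne_zero_iff.mpr fun p hp => pow_ne_zero _ <| hχ.ne_zero_of_coprime <|
      Nat.coprime_of_modEq_one_of_modEq_self (hP p hp) hN (hm p hp).1 (hm p hp).2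
  rw [prod_div_distrib, prod_mul_distrib, hχp_n, ha_n]
  field_simp

theorem stmt_12 (h lam : ℕ) (hh : 1 ≤ h) (hlam : 1 ≤ lam)
    (hcop : Nat.Coprime h lam) (hge : 2 ≤ h * lam)
    (a : ℕ → ℂ) (ha : IsMultiplicativeSeq a)
    (χ : ℕ → ℂ) (hχ : IsDirichletCharacterSeq (h * lam) χ)
    (haχ : ∀ n : ℕ, 1 ≤ n → Nat.Coprime n (h * lam) → a n = χ n)
    (χp : ℕ → ℕ → ℂ)
    (hχp : ∀ p ∈ (h * lam).primeFactors,
      IsDirichletCharacterSeq (p ^ padicValNat p (h * lam)) (χp p))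
    (hprod : ∀ n : ℕ, χ n = ∏ p ∈ (h * lam).primeFactors, χp p n)
    (m : ℕ → ℕ)
    (hm : ∀ p ∈ (h * lam).primeFactors,
      m p ≡ 1 [MOD p ^ padicValNat p (h * lam)] ∧
      m p ≡ p [MOD (h * lam) / p ^ padicValNat p (h * lam)]) :
    ∀ n : ℕ, 1 ≤ n →
      a n = ∏ p ∈ (h * lam).primeFactors,
        χp p (n / p ^ padicValNat p n) * a (p ^ padicValNat p n) /
          (χ (m p)) ^ padicValNat p n :=
  stmt_12_general h lam hh hlam a ha χ hχ haχ χp hχp hprod m hm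
end

section
/- Let p be a prime, let f₁ : ℕ → ℂ be eventually periodic with f₁(0) = 1, let f₂ : ℕ → ℂ be multiplicative, eventually periodic, with f₂(n) = 0 whenever p ∣ n, and let a : ℕ → ℂ satisfy a(n) = f₁(ν_p(n)) · f₂(n / p^{ν_p(n)}) for all n ≥ 1. Suppose the averages (1/N)·∑_{n=1}^{N} f₂(n) converge to m ∈ ℂ as N → ∞. Then the averages (1/N)·∑_{n=1}^{N} a(n) converge as N → ∞ to m · ∑_{k=0}^{∞} f₁(k)/p^k (the series converges absolutely since f₁ is bounded). -/
open Filter Topology Finset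

lemma EventuallyPeriodicSeq.exists_norm_le {f : ℕ → ℂ} (h : EventuallyPeriodicSeq f) :
    ∃ C : ℝ, ∀ n, ‖f n‖ ≤ C := by
  obtain ⟨d, hd, n₀, hper⟩ := h
  refine ⟨∑ j ∈ range (n₀ + d), ‖f j‖, fun n => ?_⟩
  induction n using Nat.strong_induction_on with
  | _ n ih =>
    by_cases hn : n < n₀ + d
    · exact single_le_sum (f := fun j => ‖f j‖) (fun _ _ => norm_nonneg _) (mem_range.2 hn)
    · have hshift := hper (n - d) (by omega)
      rw [Nat.sub_add_cancel (by omega)] at hshift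
      exact hshift ▸ ih (n - d) (by omega)

lemma sum_Icc_eq_sum_range_sum_Icc_not_dvd {M : Type*} [AddCommMonoid M] {p : ℕ} (hp : p.Prime)
    (h : ℕ → ℕ → M) (N : ℕ) :
    ∑ n ∈ Icc 1 N, h (padicValNat p n) (n / p ^ padicValNat p n) =
      ∑ k ∈ range (N + 1), ∑ x ∈ Icc 1 (N / p ^ k) with ¬p ∣ x, h k x := by
  have : Fact p.Prime := ⟨hp⟩
  rw [sum_sigma']
  refine sum_nbij' (fun n => ⟨padicValNat p n, n / p ^ padicValNat p n⟩)
    (fun x => p ^ x.1 * x.2) ?_ ?_ ?_ ?_ (fun _ _ => rfl)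
  · intro n hn
    simp only [mem_Icc] at hn
    have hdvd : p ^ padicValNat p n ∣ n := pow_padicValNat_dvd
    have hle : p ^ padicValNat p n ≤ n := Nat.le_of_dvd (by omega) hdvd
    simp only [mem_sigma, mem_range, mem_filter, mem_Icc]
    refine ⟨?_, ⟨Nat.div_pos hle (pow_pos hp.pos _), Nat.div_le_div_right hn.2⟩, ?_⟩
    · have := Nat.lt_pow_self (n := padicValNat p n) hp.one_lt
      omega
    · simpa [Nat.factorization_def n hp] using Nat.not_dvd_ordCompl hp (by omega : n ≠ 0)
  · rintro ⟨k, x⟩ hx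
    simp only [mem_sigma, mem_range, mem_filter, mem_Icc] at hx ⊢
    obtain ⟨-, ⟨hx1, hx2⟩, -⟩ := hx
    exact ⟨Nat.mul_pos (pow_pos hp.pos k) hx1,
      (Nat.mul_le_mul_left _ hx2).trans (Nat.mul_div_le N (p ^ k))⟩
  · intro n _
    exact Nat.mul_div_cancel' pow_padicValNat_dvd
  · rintro ⟨k, x⟩ hx
    simp only [mem_sigma, mem_range, mem_filter, mem_Icc] at hx
    obtain ⟨-, ⟨hx1, -⟩, hxp⟩ := hx
    have hv : padicValNat p (p ^ k * x) = k := by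
      rw [padicValNat.mul (pow_ne_zero k hp.ne_zero) (by omega), padicValNat.prime_pow,
        padicValNat.eq_zero_of_not_dvd hxp, add_zero]
    simp only [hv, Nat.mul_div_cancel_left x (pow_pos hp.pos k)]

lemma tendsto_natCast_div_div_natCast (q : ℕ) :
    Tendsto (fun N : ℕ => ((N / q : ℕ) : ℂ) / N) atTop (𝓝 (q : ℂ)⁻¹) := by
  have hR : Tendsto (fun N : ℕ => ((N / q : ℕ) : ℝ) / N) atTop (𝓝 (q : ℝ)⁻¹) := by
    have := (tendsto_nat_floor_mul_div_atTop (R := ℝ) (inv_nonneg.2 q.cast_nonneg)).comp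
      tendsto_natCast_atTop_atTop
    refine this.congr fun N => ?_
    simp [inv_mul_eq_div, Nat.floor_div_eq_div]
  simpa [Function.comp_def] using (Complex.continuous_ofReal.tendsto _).comp hR

lemma Filter.Tendsto.inv_mul_comp_div {S : ℕ → ℂ} {m : ℂ}
    (hS : Tendsto (fun M : ℕ => (M : ℂ)⁻¹ * S M) atTop (𝓝 m)) {q : ℕ} (hq : 0 < q) :
    Tendsto (fun N : ℕ => (N : ℂ)⁻¹ * S (N / q)) atTop (𝓝 (m / q)) := by
  have hdiv : Tendsto (fun N : ℕ => N / q) atTop atTop :=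
    Nat.tendsto_div_const_atTop hq.ne'
  rw [div_eq_mul_inv, mul_comm]
  refine ((tendsto_natCast_div_div_natCast q).mul (hS.comp hdiv)).congr' ?_
  filter_upwards [eventually_ge_atTop q] with N hN
  have : ((N / q : ℕ) : ℂ) ≠ 0 := by
    exact_mod_cast (Nat.div_pos hN hq).ne'
  simp only [Function.comp_apply]
  field_simp

lemma exists_norm_le_mul_of_tendsto_inv_mul {S : ℕ → ℂ} {m : ℂ} (hS0 : S 0 = 0)
    (hS : Tendsto (fun M : ℕ => (M : ℂ)⁻¹ * S M) atTop (𝓝 m)) :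
    ∃ C : ℝ, ∀ M : ℕ, ‖S M‖ ≤ C * M := by
  obtain ⟨C, hC⟩ := isBounded_iff_forall_norm_le.1 (Metric.isBounded_range_of_tendsto _ hS)
  refine ⟨C, fun M => ?_⟩
  rcases M.eq_zero_or_pos with rfl | hM
  · simp [hS0]
  have hM' : (0 : ℝ) < M := by exact_mod_cast hM
  have := hC _ ⟨M, rfl⟩
  rw [norm_mul, norm_inv, Complex.norm_natCast, inv_mul_le_iff₀ hM'] at this
  linarith

lemma norm_inv_mul_comp_div_le {S : ℕ → ℂ} {C : ℝ} (hS : ∀ M : ℕ, ‖S M‖ ≤ C * M)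
    (N q : ℕ) : ‖(N : ℂ)⁻¹ * S (N / q)‖ ≤ C / q := by
  have hC : 0 ≤ C := by simpa using (norm_nonneg _).trans (hS 1)
  rcases N.eq_zero_or_pos with rfl | hN
  · simpa using div_nonneg hC q.cast_nonneg
  have hN' : (0 : ℝ) < N := by exact_mod_cast hN
  calc ‖(N : ℂ)⁻¹ * S (N / q)‖ = ‖S (N / q)‖ / N := by
        rw [norm_mul, norm_inv, Complex.norm_natCast, inv_mul_eq_div]
    _ ≤ C * ((N / q : ℕ) : ℝ) / N := by gcongr; exact hS _
    _ ≤ C * ((N : ℝ) / q) / N := by gcongr; exact Nat.cast_div_le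
    _ = C / q := by field_simp

lemma inv_mul_sum_Icc_eq_tsum {p : ℕ} (hp : p.Prime) {f₁ f₂ a : ℕ → ℂ}
    (hf₂0 : ∀ n : ℕ, p ∣ n → f₂ n = 0)
    (hdef : ∀ n : ℕ, 1 ≤ n → a n = f₁ (padicValNat p n) * f₂ (n / p ^ padicValNat p n))
    (N : ℕ) :
    (N : ℂ)⁻¹ * ∑ n ∈ Icc 1 N, a n =
      ∑' k, f₁ k * ((N : ℂ)⁻¹ * ∑ n ∈ Icc 1 (N / p ^ k), f₂ n) := by
  have hsplit : ∀ k, f₁ k * ∑ n ∈ Icc 1 (N / p ^ k), f₂ n =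
      ∑ x ∈ Icc 1 (N / p ^ k) with ¬p ∣ x, f₁ k * f₂ x := fun k => by
    rw [mul_sum, sum_filter_of_ne]
    intro x _ hx hdvd
    exact hx (by rw [hf₂0 x hdvd, mul_zero])
  rw [sum_congr rfl fun n hn => hdef n (mem_Icc.1 hn).1,
    sum_Icc_eq_sum_range_sum_Icc_not_dvd hp (fun k x => f₁ k * f₂ x),
    ← sum_congr rfl fun k _ => hsplit k,
    tsum_eq_sum (s := range (N + 1)), mul_sum]
  · exact sum_congr rfl fun k _ => by ring
  · intro k hk
    have : N < p ^ k := (by simpa using hk : N < k).trans (Nat.lt_pow_self hp.one_lt)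
    simp [Nat.div_eq_of_lt this]

open Filter in
theorem stmt_19_general (p : ℕ) (hp : p.Prime)
    (f₁ : ℕ → ℂ) (hf₁ : EventuallyPeriodicSeq f₁)
    (f₂ : ℕ → ℂ)
    (hf₂0 : ∀ n : ℕ, p ∣ n → f₂ n = 0)
    (a : ℕ → ℂ)
    (hdef : ∀ n : ℕ, 1 ≤ n →
      a n = f₁ (padicValNat p n) * f₂ (n / p ^ padicValNat p n))
    (m : ℂ)
    (hconv : Tendsto (fun N : ℕ => (N : ℂ)⁻¹ * ∑ n ∈ Finset.Icc 1 N, f₂ n)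
      atTop (nhds m)) :
    Tendsto (fun N : ℕ => (N : ℂ)⁻¹ * ∑ n ∈ Finset.Icc 1 N, a n)
      atTop (nhds (m * ∑' k : ℕ, f₁ k / (p : ℂ) ^ k)) := by
  obtain ⟨C₁, hC₁⟩ := hf₁.exists_norm_le
  obtain ⟨C₂, hC₂⟩ := exists_norm_le_mul_of_tendsto_inv_mul (by simp) hconv
  have hC₁0 : 0 ≤ C₁ := (norm_nonneg _).trans (hC₁ 0)
  have hlim : m * ∑' k : ℕ, f₁ k / (p : ℂ) ^ k = ∑' k : ℕ, f₁ k * (m / (p ^ k : ℕ)) := by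
    rw [← tsum_mul_left]
    exact tsum_congr fun k => by push_cast; ring
  simp_rw [inv_mul_sum_Icc_eq_tsum hp hf₂0 hdef, hlim]
  refine tendsto_tsum_of_dominated_convergence (bound := fun k => C₁ * C₂ * (p : ℝ)⁻¹ ^ k)
    ?_ (fun k => (hconv.inv_mul_comp_div (pow_pos hp.pos k)).const_mul (f₁ k)) ?_
  · exact (summable_geometric_of_lt_one (by positivity)
      (inv_lt_one_of_one_lt₀ (by exact_mod_cast hp.one_lt))).mul_left _
  · refine Eventually.of_forall fun N k => ?_
    calc ‖f₁ k * ((N : ℂ)⁻¹ * ∑ n ∈ Icc 1 (N / p ^ k), f₂ n)‖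
        ≤ C₁ * (C₂ / (p ^ k : ℕ)) := by
          rw [norm_mul]
          exact mul_le_mul (hC₁ k) (norm_inv_mul_comp_div_le hC₂ N _) (norm_nonneg _) hC₁0
      _ = C₁ * C₂ * (p : ℝ)⁻¹ ^ k := by push_cast; ring

open Filter in
theorem stmt_19 (p : ℕ) (hp : p.Prime)
    (f₁ : ℕ → ℂ) (hf₁ : EventuallyPeriodicSeq f₁) (hf₁0 : f₁ 0 = 1)
    (f₂ : ℕ → ℂ) (hf₂m : IsMultiplicativeSeq f₂) (hf₂ : EventuallyPeriodicSeq f₂)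
    (hf₂0 : ∀ n : ℕ, p ∣ n → f₂ n = 0)
    (a : ℕ → ℂ)
    (hdef : ∀ n : ℕ, 1 ≤ n →
      a n = f₁ (padicValNat p n) * f₂ (n / p ^ padicValNat p n))
    (m : ℂ)
    (hconv : Tendsto (fun N : ℕ => (N : ℂ)⁻¹ * ∑ n ∈ Finset.Icc 1 N, f₂ n)
      atTop (nhds m)) :
    Tendsto (fun N : ℕ => (N : ℂ)⁻¹ * ∑ n ∈ Finset.Icc 1 N, a n)
      atTop (nhds (m * ∑' k : ℕ, f₁ k / (p : ℂ) ^ k)) :=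
  stmt_19_general p hp f₁ hf₁ f₂ hf₂0 a hdef m hconv
end
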